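/- Let H_S = ⊕_{p} (H̃_{S,p} ⊗ H_p) and H_R = ⊕_{p} (H̃_{R,p} ⊗ H_p) be finite direct sums of tensor products of finite-dimensional Hilbert spaces, M : H_S → H_R a linear map, and let the uncertainty set consist of block-diagonal operators Δ = ⊕_p (W_p ⊗ I_{H_p}) with W_p : H̃_{R,p} → H̃_{S,p}. If there exist positive definite operators Γ_p on H_p such that M* (⊕_p I_{H̃_{R,p}} ⊗ Γ_p) M − (⊕_p I_{H̃_{S,p}} ⊗ Γ_p) ≺ 0, then I − Δ M is invertible for every Δ = ⊕_p (W_p ⊗ I_{H_p}) with ‖W_p‖ ≤ 1 for all p. -/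

import Mathlib

open Matrix
open scoped Kronecker ComplexOrder

/-- The operator norm of a (rectangular) matrix viewed as an operator between
Euclidean spaces. -/
noncomputable def euclideanOpNorm {a b : Type*} [Fintype a] [Fintype b] [DecidableEq b]
    (T : Matrix a b ℂ) : ℝ :=
  ‖LinearMap.toContinuousLinearMap (Matrix.toEuclideanLin T)‖

/-!
If `I - ΔM` were singular, pick `x ≠ 0` with `x = ΔMx` and put `y = Mx`. Writing `S` and `R` for
the `Γ`-scalings `⊕_p I ⊗ Γ_p` on `H_S` and `H_R`, the Stein inequality gives `⟨y, Ry⟩ < ⟨x, Sx⟩`.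
On the other hand `R - Δ* S Δ = ⊕_p (I - W_p* W_p) ⊗ Γ_p` is positive semidefinite, because the
`Γ_p` act only on the multiplicity spaces `H_p` that `Δ` does not touch; hence
`⟨x, Sx⟩ = ⟨Δy, SΔy⟩ ≤ ⟨y, Ry⟩`, a contradiction.
-/

namespace Matrix

variable {𝕜 : Type*} [RCLike 𝕜]

lemma star_dotProduct_conjTranspose_mul_mul_mulVec {α m n : Type*} [CommSemiring α] [StarRing α]
    [Fintype m] [Fintype n] (A : Matrix m n α) (B : Matrix m m α) (x : n → α) :
    star x ⬝ᵥ ((Aᴴ * B * A) *ᵥ x) = star (A *ᵥ x) ⬝ᵥ (B *ᵥ (A *ᵥ x)) := by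
  rw [star_mulVec, ← dotProduct_mulVec, mulVec_mulVec, mulVec_mulVec, Matrix.mul_assoc]

theorem isUnit_one_sub_mul_of_posSemidef_of_posDef {m n : Type*} [Fintype m] [Fintype n]
    [DecidableEq m] {Δ : Matrix m n 𝕜} {M : Matrix n m 𝕜} {S : Matrix m m 𝕜} {R : Matrix n n 𝕜}
    (hΔ : (R - Δᴴ * S * Δ).PosSemidef) (hM : (S - Mᴴ * R * M).PosDef) :
    IsUnit (1 - Δ * M) := by
  rw [isUnit_iff_isUnit_det, isUnit_iff_ne_zero, Ne, ← exists_mulVec_eq_zero_iff]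
  rintro ⟨x, hx0, hx⟩
  have hfix : Δ *ᵥ (M *ᵥ x) = x := by
    rw [sub_mulVec, one_mulVec, sub_eq_zero] at hx
    rw [mulVec_mulVec, ← hx]
  have hlt := hM.dotProduct_mulVec_pos hx0
  have hle := hΔ.dotProduct_mulVec_nonneg (M *ᵥ x)
  rw [sub_mulVec, dotProduct_sub, sub_pos, star_dotProduct_conjTranspose_mul_mul_mulVec] at hlt
  rw [sub_mulVec, dotProduct_sub, sub_nonneg, star_dotProduct_conjTranspose_mul_mul_mulVec,
    hfix] at hle
  exact hle.not_gt hlt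

lemma star_dotProduct_self_eq_norm_sq {n : Type*} [Fintype n] (v : n → 𝕜) :
    star v ⬝ᵥ v = ((‖WithLp.toLp 2 v‖ ^ 2 : ℝ) : 𝕜) := by
  rw [dotProduct_comm, ← EuclideanSpace.inner_toLp_toLp, inner_self_eq_norm_sq_to_K]
  norm_cast

section L2OpNorm

open scoped Matrix.Norms.L2Operator

lemma posSemidef_one_sub_conjTranspose_mul_self {m n : Type*} [Fintype m] [Fintype n]
    [DecidableEq n] {W : Matrix m n 𝕜} (hW : ‖W‖ ≤ 1) : (1 - Wᴴ * W).PosSemidef := by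
  refine .of_dotProduct_mulVec_nonneg (isHermitian_one.sub (isHermitian_conjTranspose_mul_self W))
    fun v => ?_
  have hcontr : ‖WithLp.toLp 2 (W *ᵥ v)‖ ≤ ‖WithLp.toLp 2 v‖ :=
    (l2_opNorm_mulVec W (WithLp.toLp 2 v)).trans (mul_le_of_le_one_left (norm_nonneg _) hW)
  rw [sub_mulVec, one_mulVec, dotProduct_sub, sub_nonneg, ← mulVec_mulVec, dotProduct_mulVec,
    ← star_mulVec, star_dotProduct_self_eq_norm_sq, star_dotProduct_self_eq_norm_sq]
  exact_mod_cast pow_le_pow_left₀ (norm_nonneg _) hcontr 2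

lemma _root_.euclideanOpNorm_eq_l2_opNorm {a b : Type*} [Fintype a] [Fintype b] [DecidableEq b]
    (T : Matrix a b ℂ) : euclideanOpNorm T = ‖T‖ :=
  rfl

end L2OpNorm

section BlockDiagonal

variable {P : Type*} [Fintype P] [DecidableEq P] {m : P → Type*} [∀ p, Fintype (m p)]

lemma blockDiagonal'_mulVec_apply {α : Type*} [NonUnitalNonAssocSemiring α]
    (A : ∀ p, Matrix (m p) (m p) α) (x : (Σ p, m p) → α) (p : P) (i : m p) :
    (blockDiagonal' A *ᵥ x) ⟨p, i⟩ = (A p *ᵥ fun j => x ⟨p, j⟩) i := by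
  rw [mulVec, dotProduct, Fintype.sum_sigma, Fintype.sum_eq_single p]
  · simp only [blockDiagonal'_apply_eq]
    rfl
  · intro q hq
    exact Finset.sum_eq_zero fun j _ => by rw [blockDiagonal'_apply_ne _ _ _ (Ne.symm hq), zero_mul]

lemma dotProduct_blockDiagonal'_mulVec {α : Type*} [NonUnitalNonAssocSemiring α]
    (A : ∀ p, Matrix (m p) (m p) α) (y x : (Σ p, m p) → α) :
    y ⬝ᵥ (blockDiagonal' A *ᵥ x)
      = ∑ p, (fun i => y ⟨p, i⟩) ⬝ᵥ (A p *ᵥ fun i => x ⟨p, i⟩) := by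
  simp only [dotProduct, Fintype.sum_sigma, blockDiagonal'_mulVec_apply]

lemma PosSemidef.blockDiagonal' {A : ∀ p, Matrix (m p) (m p) 𝕜}
    (hA : ∀ p, (A p).PosSemidef) : (blockDiagonal' A).PosSemidef :=
  .of_dotProduct_mulVec_nonneg (isHermitian_blockDiagonal'_iff.mpr fun p => (hA p).isHermitian)
    fun x => (dotProduct_blockDiagonal'_mulVec A _ x).symm ▸
      Finset.sum_nonneg fun p _ => (hA p).dotProduct_mulVec_nonneg _

end BlockDiagonal

lemma one_kronecker_sub_conjTranspose_mul_mul_kronecker_one {α m n d : Type*} [CommRing α]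
    [StarRing α] [Fintype m] [Fintype d] [DecidableEq m] [DecidableEq n] [DecidableEq d]
    (W : Matrix m n α) (Γ : Matrix d d α) :
    (1 : Matrix n n α) ⊗ₖ Γ - (W ⊗ₖ (1 : Matrix d d α))ᴴ * ((1 : Matrix m m α) ⊗ₖ Γ) *
      (W ⊗ₖ (1 : Matrix d d α)) = (1 - Wᴴ * W) ⊗ₖ Γ := by
  rw [sub_eq_iff_eq_add', conjTranspose_kronecker, conjTranspose_one, ← mul_kronecker_mul,
    ← mul_kronecker_mul, Matrix.mul_one, Matrix.one_mul, Matrix.mul_one, ← add_kronecker,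
    add_sub_cancel]

end Matrix

/-- Structured Stein inequality implies structured small gain, higher
multiplicity case.  With `H_S = ⊕_p (H̃_{S,p} ⊗ H_p)`, `H_R = ⊕_p (H̃_{R,p} ⊗ H_p)`
(all finite-dimensional, realized via Kronecker products of matrices), if there
exist positive definite `Γ_p` on `H_p` with
`M* (⊕_p I ⊗ Γ_p) M − (⊕_p I ⊗ Γ_p) ≺ 0`, then `I − Δ M` is invertible for
every `Δ = ⊕_p (W_p ⊗ I_{H_p})` with `‖W_p‖ ≤ 1` for all `p`. -/
theorem structured_stein_implies_small_gain
    {P : Type*} [Fintype P] [DecidableEq P]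
    (ns nr d : P → ℕ)
    (M : Matrix (Σ p : P, Fin (nr p) × Fin (d p)) (Σ p : P, Fin (ns p) × Fin (d p)) ℂ)
    (Γ : ∀ p : P, Matrix (Fin (d p)) (Fin (d p)) ℂ)
    (hΓ : ∀ p, (Γ p).PosDef)
    (hStein : (-(Mᴴ *
        Matrix.blockDiagonal' (fun p => (1 : Matrix (Fin (nr p)) (Fin (nr p)) ℂ) ⊗ₖ Γ p) * M
        - Matrix.blockDiagonal'
            (fun p => (1 : Matrix (Fin (ns p)) (Fin (ns p)) ℂ) ⊗ₖ Γ p))).PosDef) :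
    ∀ W : ∀ p : P, Matrix (Fin (ns p)) (Fin (nr p)) ℂ,
      (∀ p, euclideanOpNorm (W p) ≤ 1) →
      IsUnit ((1 : Matrix (Σ p : P, Fin (ns p) × Fin (d p)) (Σ p : P, Fin (ns p) × Fin (d p)) ℂ)
        - Matrix.blockDiagonal' (fun p => W p ⊗ₖ (1 : Matrix (Fin (d p)) (Fin (d p)) ℂ)) * M) := by
  intro W hW
  rw [neg_sub] at hStein
  refine isUnit_one_sub_mul_of_posSemidef_of_posDef ?_ hStein
  rw [blockDiagonal'_conjTranspose, ← blockDiagonal'_mul, ← blockDiagonal'_mul,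
    ← blockDiagonal'_sub]
  refine PosSemidef.blockDiagonal' fun p => ?_
  rw [Pi.sub_apply, one_kronecker_sub_conjTranspose_mul_mul_kronecker_one]
  have hWp := (euclideanOpNorm_eq_l2_opNorm (W p)).symm.trans_le (hW p)
  exact (posSemidef_one_sub_conjTranspose_mul_self hWp).kronecker (hΓ p).posSemidef
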